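/- arXiv:2005.13245 — 8 statements merged into one kernel-verified Lean document; each statement's English description precedes it below -/
import Mathlib

section
/- In the proxy setup: if E[Y|A,D] is monotone in D, then RD_obs lies between RD_true and RD_crude, i.e. min(RD_true, RD_crude) ≤ RD_obs ≤ max(RD_true, RD_crude). -/
/-! Write `g_x = E[Y|x,c] - E[Y|x,c']`. Since `E[Y|x,·]` is affine in the posterior of `c`,
`E[Y|x,d] - E[Y|x,d']` is `g_x` times a quantity with the sign of `p(d|c) - p(d|c')`, so
monotonicity in `D` forces `g_a g_{a'} ≥ 0`. For the same reason `RD_true`, `RD_obs` and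
`RD_crude` are `E[Y|a,·] - E[Y|a',·]` evaluated at the prior `p(c)`, at the posterior
`p(c|x,D)` averaged over the law of `D`, and at `p(c|x)`. The averaged posterior lies between
the other two: it moves away from `p(c)` by `δ M_x` and from `p(c|x)` by `-δ N_x`, with
`δ = p(a|c) - p(a|c')` and `M_x, N_x ≥ 0`. As `g_a, g_{a'}` have a common sign,
`RD_obs - RD_true` and `RD_obs - RD_crude` then have opposite signs. -/

/-- p(c | x, v) = p(x|c) p(v|c) p(c) / (p(x|c) p(v|c) p(c) + p(x|c') p(v|c') p(c')),
with p(c') = 1 - p(c). -/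
noncomputable def pcGiven (pxc pxc' pvc pvc' pc : ℝ) : ℝ :=
  pxc * pvc * pc / (pxc * pvc * pc + pxc' * pvc' * (1 - pc))

/-- E[Y | x, v] = E[Y|x,c] * p(c|x,v) + E[Y|x,c'] * (1 - p(c|x,v)). -/
noncomputable def condExp (yc yc' w : ℝ) : ℝ := yc * w + yc' * (1 - w)

/-- `Σ_v p(v) p(c|x,v)`, the posterior of `c` given `x` standardized over the law of `D`. -/
noncomputable def stdPcGiven (pxc pxc' pdc pdc' pc : ℝ) : ℝ :=
  pcGiven pxc pxc' pdc pdc' pc * (pdc * pc + pdc' * (1 - pc)) +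
    pcGiven pxc pxc' (1 - pdc) (1 - pdc') pc * (1 - (pdc * pc + pdc' * (1 - pc)))

theorem min_le_and_le_max_of_mul_nonpos {t c o : ℝ} (h : (o - t) * (o - c) ≤ 0) :
    min t c ≤ o ∧ o ≤ max t c := by
  rcases mul_nonpos_iff.mp h with ⟨h1, h2⟩ | ⟨h1, h2⟩
  · exact ⟨(min_le_left _ _).trans (by linarith), (by linarith : o ≤ c).trans (le_max_right _ _)⟩
  · exact ⟨(min_le_right _ _).trans (by linarith), (by linarith : o ≤ t).trans (le_max_left _ _)⟩

theorem mul_nonpos_of_opposite_weights {g₁ g₂ δ M₁ M₂ N₁ N₂ : ℝ} (hg : 0 ≤ g₁ * g₂)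
    (hM₁ : 0 ≤ M₁) (hM₂ : 0 ≤ M₂) (hN₁ : 0 ≤ N₁) (hN₂ : 0 ≤ N₂) :
    (g₁ * (δ * M₁) + g₂ * (δ * M₂)) * (g₁ * (-δ * N₁) + g₂ * (-δ * N₂)) ≤ 0 := by
  have hMN : 0 ≤ (g₁ * M₁ + g₂ * M₂) * (g₁ * N₁ + g₂ * N₂) := by
    have : (g₁ * M₁ + g₂ * M₂) * (g₁ * N₁ + g₂ * N₂) =
        g₁ ^ 2 * (M₁ * N₁) + g₁ * g₂ * (M₁ * N₂ + M₂ * N₁) + g₂ ^ 2 * (M₂ * N₂) := by ring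
    rw [this]
    positivity
  have : (g₁ * (δ * M₁) + g₂ * (δ * M₂)) * (g₁ * (-δ * N₁) + g₂ * (-δ * N₂)) =
      -(δ ^ 2 * ((g₁ * M₁ + g₂ * M₂) * (g₁ * N₁ + g₂ * N₂))) := by ring
  rw [this, neg_nonpos]
  positivity

theorem nonneg_of_mul_mul_scaled_nonneg {g₁ g₂ ε K₁ K₂ : ℝ} (hε : ε ≠ 0) (hK₁ : 0 < K₁)
    (hK₂ : 0 < K₂) (h : 0 ≤ g₁ * (ε * K₁) * (g₂ * (ε * K₂))) : 0 ≤ g₁ * g₂ := by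
  have hpos : 0 < ε ^ 2 * (K₁ * K₂) := by positivity
  exact nonneg_of_mul_nonneg_left (h.trans_eq (by ring)) hpos

theorem condExp_sub_condExp (yc yc' w w' : ℝ) :
    condExp yc yc' w - condExp yc yc' w' = (yc - yc') * (w - w') := by
  unfold condExp; ring

theorem proxy_denom_pos {pxc pxc' pvc pvc' pc : ℝ} (hx : 0 < pxc) (hx' : 0 < pxc')
    (hv : 0 < pvc) (hv' : 0 < pvc') (hpc0 : 0 < pc) (hpc1 : pc < 1) :
    0 < pxc * pvc * pc + pxc' * pvc' * (1 - pc) := by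
  have := sub_pos.2 hpc1
  positivity

section Posterior

variable {pxc pxc' pdc pdc' pc : ℝ}

theorem pcGiven_sub_pcGiven_compl (hx : 0 < pxc) (hx' : 0 < pxc') (hpdc0 : 0 < pdc)
    (hpdc1 : pdc < 1) (hpdc'0 : 0 < pdc') (hpdc'1 : pdc' < 1) (hpc0 : 0 < pc) (hpc1 : pc < 1) :
    ∃ K > 0, pcGiven pxc pxc' pdc pdc' pc - pcGiven pxc pxc' (1 - pdc) (1 - pdc') pc =
      (pdc - pdc') * K := by
  have hD := proxy_denom_pos hx hx' hpdc0 hpdc'0 hpc0 hpc1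
  have hD' := proxy_denom_pos hx hx' (sub_pos.2 hpdc1) (sub_pos.2 hpdc'1) hpc0 hpc1
  have := sub_pos.2 hpc1
  refine ⟨pxc * pxc' * (pc * (1 - pc)) / ((pxc * pdc * pc + pxc' * pdc' * (1 - pc)) *
    (pxc * (1 - pdc) * pc + pxc' * (1 - pdc') * (1 - pc))), by positivity, ?_⟩
  unfold pcGiven
  rw [div_sub_div _ _ hD.ne' hD'.ne', mul_div_assoc']
  congr 1
  ring

theorem stdPcGiven_sub_prior (hx : 0 < pxc) (hx' : 0 < pxc') (hpdc0 : 0 < pdc)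
    (hpdc1 : pdc < 1) (hpdc'0 : 0 < pdc') (hpdc'1 : pdc' < 1) (hpc0 : 0 < pc) (hpc1 : pc < 1) :
    ∃ M ≥ 0, stdPcGiven pxc pxc' pdc pdc' pc - pc = (pxc - pxc') * M := by
  have hD := proxy_denom_pos hx hx' hpdc0 hpdc'0 hpc0 hpc1
  have hD' := proxy_denom_pos hx hx' (sub_pos.2 hpdc1) (sub_pos.2 hpdc'1) hpc0 hpc1
  have := sub_pos.2 hpc1
  have := sub_pos.2 hpdc1
  have := sub_pos.2 hpdc'1
  refine ⟨pc * (1 - pc) * (pdc * pdc' * (pxc * (1 - pdc) * pc + pxc' * (1 - pdc') * (1 - pc)) +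
      (1 - pdc) * (1 - pdc') * (pxc * pdc * pc + pxc' * pdc' * (1 - pc))) /
    ((pxc * pdc * pc + pxc' * pdc' * (1 - pc)) *
      (pxc * (1 - pdc) * pc + pxc' * (1 - pdc') * (1 - pc))), by positivity, ?_⟩
  unfold stdPcGiven pcGiven
  rw [div_mul_eq_mul_div, div_mul_eq_mul_div, div_add_div _ _ hD.ne' hD'.ne',
    div_sub' (mul_pos hD hD').ne', mul_div_assoc']
  congr 1
  ring

theorem stdPcGiven_sub_crude (hx : 0 < pxc) (hx' : 0 < pxc') (hpdc0 : 0 < pdc)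
    (hpdc1 : pdc < 1) (hpdc'0 : 0 < pdc') (hpdc'1 : pdc' < 1) (hpc0 : 0 < pc) (hpc1 : pc < 1) :
    ∃ N ≥ 0, stdPcGiven pxc pxc' pdc pdc' pc - pcGiven pxc pxc' 1 1 pc = -(pxc - pxc') * N := by
  have hD := proxy_denom_pos hx hx' hpdc0 hpdc'0 hpc0 hpc1
  have hD' := proxy_denom_pos hx hx' (sub_pos.2 hpdc1) (sub_pos.2 hpdc'1) hpc0 hpc1
  have hD₁ := proxy_denom_pos hx hx' one_pos one_pos hpc0 hpc1
  have := sub_pos.2 hpc1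
  refine ⟨(pc * (1 - pc)) ^ 2 * (pdc - pdc') ^ 2 * pxc * pxc' /
    ((pxc * pdc * pc + pxc' * pdc' * (1 - pc)) *
      (pxc * (1 - pdc) * pc + pxc' * (1 - pdc') * (1 - pc)) * (pxc * 1 * pc + pxc' * 1 * (1 - pc))),
    by positivity, ?_⟩
  unfold stdPcGiven pcGiven
  rw [div_mul_eq_mul_div, div_mul_eq_mul_div, div_add_div _ _ hD.ne' hD'.ne',
    div_sub_div _ _ (mul_pos hD hD').ne' hD₁.ne', mul_div_assoc']
  congr 1
  ring

end Posterior

theorem sub_mul_sub_nonneg_of_monotone_proxy {ya ya' yb yb' pxa pxa' pxb pxb' pdc pdc' pc : ℝ}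
    (hxa : 0 < pxa) (hxa' : 0 < pxa') (hxb : 0 < pxb) (hxb' : 0 < pxb')
    (hpdc0 : 0 < pdc) (hpdc1 : pdc < 1) (hpdc'0 : 0 < pdc') (hpdc'1 : pdc' < 1)
    (hpc0 : 0 < pc) (hpc1 : pc < 1) (hne : pdc ≠ pdc')
    (hmono : (condExp ya ya' (pcGiven pxa pxa' pdc pdc' pc) ≥
          condExp ya ya' (pcGiven pxa pxa' (1 - pdc) (1 - pdc') pc) ∧
        condExp yb yb' (pcGiven pxb pxb' pdc pdc' pc) ≥
          condExp yb yb' (pcGiven pxb pxb' (1 - pdc) (1 - pdc') pc)) ∨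
      (condExp ya ya' (pcGiven pxa pxa' pdc pdc' pc) ≤
          condExp ya ya' (pcGiven pxa pxa' (1 - pdc) (1 - pdc') pc) ∧
        condExp yb yb' (pcGiven pxb pxb' pdc pdc' pc) ≤
          condExp yb yb' (pcGiven pxb pxb' (1 - pdc) (1 - pdc') pc))) :
    0 ≤ (ya - ya') * (yb - yb') := by
  obtain ⟨Ka, hKa, hwa⟩ :=
    pcGiven_sub_pcGiven_compl hxa hxa' hpdc0 hpdc1 hpdc'0 hpdc'1 hpc0 hpc1
  obtain ⟨Kb, hKb, hwb⟩ :=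
    pcGiven_sub_pcGiven_compl hxb hxb' hpdc0 hpdc1 hpdc'0 hpdc'1 hpc0 hpc1
  have hΔ : 0 ≤ (condExp ya ya' (pcGiven pxa pxa' pdc pdc' pc) -
        condExp ya ya' (pcGiven pxa pxa' (1 - pdc) (1 - pdc') pc)) *
      (condExp yb yb' (pcGiven pxb pxb' pdc pdc' pc) -
        condExp yb yb' (pcGiven pxb pxb' (1 - pdc) (1 - pdc') pc)) := by
    rcases hmono with ⟨ha, hb⟩ | ⟨ha, hb⟩
    · exact mul_nonneg (sub_nonneg.2 ha) (sub_nonneg.2 hb)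
    · exact mul_nonneg_of_nonpos_of_nonpos (sub_nonpos.2 ha) (sub_nonpos.2 hb)
  rw [condExp_sub_condExp, condExp_sub_condExp, hwa, hwb] at hΔ
  exact nonneg_of_mul_mul_scaled_nonneg (sub_ne_zero.2 hne) hKa hKb hΔ

theorem rdObs_eq_sub_stdPcGiven (ya ya' yb yb' pxa pxa' pxb pxb' pdc pdc' pc : ℝ) :
    (condExp ya ya' (pcGiven pxa pxa' pdc pdc' pc) - condExp yb yb' (pcGiven pxb pxb' pdc pdc' pc)) *
        (pdc * pc + pdc' * (1 - pc)) +
      (condExp ya ya' (pcGiven pxa pxa' (1 - pdc) (1 - pdc') pc) -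
          condExp yb yb' (pcGiven pxb pxb' (1 - pdc) (1 - pdc') pc)) *
        (1 - (pdc * pc + pdc' * (1 - pc))) =
      condExp ya ya' (stdPcGiven pxa pxa' pdc pdc' pc) -
        condExp yb yb' (stdPcGiven pxb pxb' pdc pdc' pc) := by
  unfold stdPcGiven condExp
  ring

theorem rdTrue_eq_sub_condExp (ya ya' yb yb' pc : ℝ) :
    (ya - yb) * pc + (ya' - yb') * (1 - pc) = condExp ya ya' pc - condExp yb yb' pc := by
  unfold condExp
  ring

/-- Proxy setup: if E[Y|A,D] is monotone in D, then RD_obs lies between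
RD_true and RD_crude. -/
theorem stmt1 (pc pdc pdc' pac pac' Yac Yac' Ybc Ybc' : ℝ)
    (hpc0 : 0 < pc) (hpc1 : pc < 1)
    (hpdc0 : 0 < pdc) (hpdc1 : pdc < 1) (hpdc'0 : 0 < pdc') (hpdc'1 : pdc' < 1)
    (hpac0 : 0 < pac) (hpac1 : pac < 1) (hpac'0 : 0 < pac') (hpac'1 : pac' < 1)
    (hne : pdc ≠ pdc')
    (hmonoD : (condExp Yac Yac' (pcGiven pac pac' pdc pdc' pc) ≥ condExp Yac Yac' (pcGiven pac pac' (1 - pdc) (1 - pdc') pc) ∧ condExp Ybc Ybc' (pcGiven (1 - pac) (1 - pac') pdc pdc' pc) ≥ condExp Ybc Ybc' (pcGiven (1 - pac) (1 - pac') (1 - pdc) (1 - pdc') pc)) ∨ (condExp Yac Yac' (pcGiven pac pac' pdc pdc' pc) ≤ condExp Yac Yac' (pcGiven pac pac' (1 - pdc) (1 - pdc') pc) ∧ condExp Ybc Ybc' (pcGiven (1 - pac) (1 - pac') pdc pdc' pc) ≤ condExp Ybc Ybc' (pcGiven (1 - pac) (1 - pac') (1 - pdc) (1 - pdc') pc)))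 :
    min ((Yac - Ybc) * pc + (Yac' - Ybc') * (1 - pc)) (condExp Yac Yac' (pcGiven pac pac' 1 1 pc) - condExp Ybc Ybc' (pcGiven (1 - pac) (1 - pac') 1 1 pc)) ≤ ((condExp Yac Yac' (pcGiven pac pac' pdc pdc' pc) - condExp Ybc Ybc' (pcGiven (1 - pac) (1 - pac') pdc pdc' pc)) * (pdc * pc + pdc' * (1 - pc)) + (condExp Yac Yac' (pcGiven pac pac' (1 - pdc) (1 - pdc') pc) - condExp Ybc Ybc' (pcGiven (1 - pac) (1 - pac') (1 - pdc) (1 - pdc') pc)) * (1 - (pdc * pc + pdc' * (1 - pc)))) ∧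
    ((condExp Yac Yac' (pcGiven pac pac' pdc pdc' pc) - condExp Ybc Ybc' (pcGiven (1 - pac) (1 - pac') pdc pdc' pc)) * (pdc * pc + pdc' * (1 - pc)) + (condExp Yac Yac' (pcGiven pac pac' (1 - pdc) (1 - pdc') pc) - condExp Ybc Ybc' (pcGiven (1 - pac) (1 - pac') (1 - pdc) (1 - pdc') pc)) * (1 - (pdc * pc + pdc' * (1 - pc)))) ≤ max ((Yac - Ybc) * pc + (Yac' - Ybc') * (1 - pc)) (condExp Yac Yac' (pcGiven pac pac' 1 1 pc) - condExp Ybc Ybc' (pcGiven (1 - pac) (1 - pac') 1 1 pc)) := by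
  have hpbc0 := sub_pos.2 hpac1
  have hpbc'0 := sub_pos.2 hpac'1
  have hg := sub_mul_sub_nonneg_of_monotone_proxy hpac0 hpac'0 hpbc0 hpbc'0
    hpdc0 hpdc1 hpdc'0 hpdc'1 hpc0 hpc1 hne hmonoD
  obtain ⟨Ma, hMa, hsa⟩ := stdPcGiven_sub_prior hpac0 hpac'0 hpdc0 hpdc1 hpdc'0 hpdc'1 hpc0 hpc1
  obtain ⟨Mb, hMb, hsb⟩ := stdPcGiven_sub_prior hpbc0 hpbc'0 hpdc0 hpdc1 hpdc'0 hpdc'1 hpc0 hpc1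
  obtain ⟨Na, hNa, hca⟩ := stdPcGiven_sub_crude hpac0 hpac'0 hpdc0 hpdc1 hpdc'0 hpdc'1 hpc0 hpc1
  obtain ⟨Nb, hNb, hcb⟩ := stdPcGiven_sub_crude hpbc0 hpbc'0 hpdc0 hpdc1 hpdc'0 hpdc'1 hpc0 hpc1
  rw [rdObs_eq_sub_stdPcGiven, rdTrue_eq_sub_condExp]
  apply min_le_and_le_max_of_mul_nonpos
  convert mul_nonpos_of_opposite_weights (δ := pac - pac') hg hMa hMb hNa hNb using 2
  · rw [sub_sub_sub_comm, condExp_sub_condExp, condExp_sub_condExp, hsa, hsb]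
    ring
  · rw [sub_sub_sub_comm, condExp_sub_condExp, condExp_sub_condExp, hca, hcb]
    ring
end

section
/- In the proxy setup (without requiring p(d|c) ≠ p(d|c')): suppose p(c) = 1/2 and p(a|c) = 1−p(a|c') = p(d|c) = 1−p(d|c') ≥ 1/2 (i.e., p(a|c) = p(a'|c') = p(d|c) = p(d'|c') ≥ 1/2). If E[Y|a,c] − E[Y|a,c'] ≥ E[Y|a',c'] − E[Y|a',c] ≥ 0, then RD_crude ≥ RD_obs ≥ RD_true. -/
def rdTrue (pc Yac Yac' Ybc Ybc' : ℝ) : ℝ :=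
  (Yac - Ybc) * pc + (Yac' - Ybc') * (1 - pc)

noncomputable def rdCrude (pc pac pac' Yac Yac' Ybc Ybc' : ℝ) : ℝ :=
  condExp Yac Yac' (pcGiven pac pac' 1 1 pc) -
    condExp Ybc Ybc' (pcGiven (1 - pac) (1 - pac') 1 1 pc)

noncomputable def rdObs (pc pdc pdc' pac pac' Yac Yac' Ybc Ybc' : ℝ) : ℝ :=
  (condExp Yac Yac' (pcGiven pac pac' pdc pdc' pc) -
      condExp Ybc Ybc' (pcGiven (1 - pac) (1 - pac') pdc pdc' pc)) * (pdc * pc + pdc' * (1 - pc)) +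
    (condExp Yac Yac' (pcGiven pac pac' (1 - pdc) (1 - pdc') pc) -
      condExp Ybc Ybc' (pcGiven (1 - pac) (1 - pac') (1 - pdc) (1 - pdc') pc)) *
      (1 - (pdc * pc + pdc' * (1 - pc)))

section HalfPrior

variable {x y : ℝ}

theorem pcGiven_one_one_half (hxy : x + y = 1) : pcGiven x y 1 1 (1 / 2) = x := by
  unfold pcGiven
  rw [div_eq_iff (by linarith)]
  linear_combination -x / 2 * hxy

theorem pcGiven_swap_half (hx : x ≠ 0) (hy : y ≠ 0) : pcGiven x y y x (1 / 2) = 1 / 2 := by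
  unfold pcGiven
  rw [div_eq_iff (by ring_nf; positivity)]
  ring

theorem pcGiven_self_half : pcGiven x y x y (1 / 2) = x ^ 2 / (x ^ 2 + y ^ 2) := by
  unfold pcGiven
  rw [show x * x * (1 / 2) + y * y * (1 - 1 / 2) = (x ^ 2 + y ^ 2) * (1 / 2) by ring,
    show x * x * (1 / 2) = x ^ 2 * (1 / 2) by ring, mul_div_mul_right _ _ (by norm_num)]

end HalfPrior

section SymmetricModel

variable (p Yac Yac' Ybc Ybc' : ℝ)

theorem rdCrude_symmetric :
    rdCrude (1 / 2) p (1 - p) Yac Yac' Ybc Ybc' =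
      rdTrue (1 / 2) Yac Yac' Ybc Ybc' + (p - 1 / 2) * ((Yac - Yac') - (Ybc' - Ybc)) := by
  unfold rdCrude rdTrue condExp
  rw [pcGiven_one_one_half (by ring), sub_sub_cancel, pcGiven_one_one_half (by ring)]
  ring

theorem rdObs_symmetric (hp0 : p ≠ 0) (hp1 : p ≠ 1) :
    rdObs (1 / 2) p (1 - p) p (1 - p) Yac Yac' Ybc Ybc' - rdTrue (1 / 2) Yac Yac' Ybc Ybc' =
      (rdCrude (1 / 2) p (1 - p) Yac Yac' Ybc Ybc' - rdTrue (1 / 2) Yac Yac' Ybc Ybc') /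
        (1 + (2 * p - 1) ^ 2) := by
  have hq : 1 - p ≠ 0 := sub_ne_zero.mpr (Ne.symm hp1)
  unfold rdObs
  rw [rdCrude_symmetric, sub_sub_cancel, pcGiven_self_half, pcGiven_swap_half hq hp0,
    pcGiven_swap_half hp0 hq, pcGiven_self_half]
  unfold rdTrue condExp
  field_simp
  ring

theorem rdTrue_le_rdObs_le_rdCrude_symmetric (hp : 1 / 2 ≤ p) (hp1 : p ≠ 1)
    (hY : Ybc' - Ybc ≤ Yac - Yac') :
    rdTrue (1 / 2) Yac Yac' Ybc Ybc' ≤ rdObs (1 / 2) p (1 - p) p (1 - p) Yac Yac' Ybc Ybc' ∧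
      rdObs (1 / 2) p (1 - p) p (1 - p) Yac Yac' Ybc Ybc' ≤
        rdCrude (1 / 2) p (1 - p) Yac Yac' Ybc Ybc' := by
  have hbias :
      0 ≤ rdCrude (1 / 2) p (1 - p) Yac Yac' Ybc Ybc' - rdTrue (1 / 2) Yac Yac' Ybc Ybc' := by
    rw [rdCrude_symmetric, add_sub_cancel_left]
    exact mul_nonneg (by linarith) (by linarith)
  have hshrink := rdObs_symmetric p Yac Yac' Ybc Ybc' (by positivity) hp1
  have hk : 1 ≤ 1 + (2 * p - 1) ^ 2 := le_add_of_nonneg_right (sq_nonneg _)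
  constructor
  · have := div_nonneg hbias (zero_le_one.trans hk)
    linarith
  · have := div_le_self hbias hk
    linarith

end SymmetricModel

theorem stmt2_general (pc pdc pdc' pac pac' Yac Yac' Ybc Ybc' : ℝ)
    (hpac1 : pac < 1)
    (hc : pc = 1/2)
    (h1 : pac = 1 - pac') (h2 : pac = pdc) (h3 : pdc = 1 - pdc') (h4 : 1/2 ≤ pac)
    (hY1 : Yac - Yac' ≥ Ybc' - Ybc) :
    (condExp Yac Yac' (pcGiven pac pac' 1 1 pc) - condExp Ybc Ybc' (pcGiven (1 - pac) (1 - pac') 1 1 pc)) ≥ ((condExp Yac Yac' (pcGiven pac pac' pdc pdc' pc) - condExp Ybc Ybc' (pcGiven (1 - pac) (1 - pac') pdc pdc' pc)) * (pdc * pc + pdc' * (1 - pc)) + (condExp Yac Yac' (pcGiven pac pac' (1 - pdc) (1 - pdc') pc) - condExp Ybc Ybc' (pcGiven (1 - pac) (1 - pac') (1 - pdc) (1 - pdc') pc)) * (1 - (pdc * pc + pdc' * (1 - pc)))) ∧ ((condExp Yac Yac' (pcGiven pac pac' pdc pdc' pc) - condExp Ybc Ybc' (pcGiven (1 - pac) (1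 - pac') pdc pdc' pc)) * (pdc * pc + pdc' * (1 - pc)) + (condExp Yac Yac' (pcGiven pac pac' (1 - pdc) (1 - pdc') pc) - condExp Ybc Ybc' (pcGiven (1 - pac) (1 - pac') (1 - pdc) (1 - pdc') pc)) * (1 - (pdc * pc + pdc' * (1 - pc)))) ≥ ((Yac - Ybc) * pc + (Yac' - Ybc') * (1 - pc)) := by
  have hpac' : pac' = 1 - pac := by linarith only [h1]
  have hpdc' : pdc' = 1 - pac := by linarith only [h2, h3]
  subst hc h2 hpac' hpdc'
  have h := rdTrue_le_rdObs_le_rdCrude_symmetric pac Yac Yac' Ybc Ybc' h4 hpac1.ne hY1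
  exact ⟨h.2, h.1⟩

/-- Proxy setup, nonmonotone case: if p(c) = 1/2,
p(a|c) = p(a'|c') = p(d|c) = p(d'|c') ≥ 1/2 and
E[Y|a,c] - E[Y|a,c'] ≥ E[Y|a',c'] - E[Y|a',c] ≥ 0,
then RD_crude ≥ RD_obs ≥ RD_true. -/
theorem stmt2 (pc pdc pdc' pac pac' Yac Yac' Ybc Ybc' : ℝ)
    (hpc0 : 0 < pc) (hpc1 : pc < 1)
    (hpdc0 : 0 < pdc) (hpdc1 : pdc < 1) (hpdc'0 : 0 < pdc') (hpdc'1 : pdc' < 1)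
    (hpac0 : 0 < pac) (hpac1 : pac < 1) (hpac'0 : 0 < pac') (hpac'1 : pac' < 1)
    (hc : pc = 1/2)
    (h1 : pac = 1 - pac') (h2 : pac = pdc) (h3 : pdc = 1 - pdc') (h4 : 1/2 ≤ pac)
    (hY1 : Yac - Yac' ≥ Ybc' - Ybc) (hY2 : Ybc' - Ybc ≥ 0) :
    (condExp Yac Yac' (pcGiven pac pac' 1 1 pc) - condExp Ybc Ybc' (pcGiven (1 - pac) (1 - pac') 1 1 pc)) ≥ ((condExp Yac Yac' (pcGiven pac pac' pdc pdc' pc) - condExp Ybc Ybc' (pcGiven (1 - pac) (1 - pac') pdc pdc' pc)) * (pdc * pc + pdc' * (1 - pc)) + (condExp Yac Yac' (pcGiven pac pac' (1 - pdc) (1 - pdc') pc) - condExp Ybc Ybc' (pcGiven (1 - pac) (1 - pac') (1 - pdc) (1 - pdc') pc)) * (1 - (pdc * pc + pdc' * (1 - pc)))) ∧ ((condExp Yac Yac' (pcGiven pac pac' pdc pdc' pc) - condExp Ybc Ybc' (pcGiven (1 - pac) (1 - pac') pdc pdc' pc)) * (pdc * pc + pdc' * (1 - pc)) + (condExp Yac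 Yac' (pcGiven pac pac' (1 - pdc) (1 - pdc') pc) - condExp Ybc Ybc' (pcGiven (1 - pac) (1 - pac') (1 - pdc) (1 - pdc') pc)) * (1 - (pdc * pc + pdc' * (1 - pc)))) ≥ ((Yac - Ybc) * pc + (Yac' - Ybc') * (1 - pc)) :=
  stmt2_general pc pdc pdc' pac pac' Yac Yac' Ybc Ybc' hpac1 hc h1 h2 h3 h4 hY1
end

section
/- In the proxy setup (without requiring p(d|c) ≠ p(d|c')): suppose p(c) = 1/2 and p(a|c) = 1−p(a|c') = p(d|c) = 1−p(d|c') ≥ 1/2 (i.e., p(a|c) = p(a'|c') = p(d|c) = p(d'|c') ≥ 1/2). If E[Y|a,c] − E[Y|a,c'] ≤ E[Y|a',c'] − E[Y|a',c] ≤ 0, then RD_crude ≤ RD_obs ≤ RD_true. -/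
lemma condExp_sub_condExp_one_sub_antitone {y y' z z' : ℝ} (hm : y - y' + (z - z') ≤ 0) :
    Antitone fun u => condExp y y' u - condExp z z' (1 - u) := by
  intro u v huv
  have hdiff : (condExp y y' v - condExp z z' (1 - v)) - (condExp y y' u - condExp z z' (1 - u))
      = (v - u) * (y - y' + (z - z')) := by
    simp only [condExp]; ring
  linarith [mul_nonpos_of_nonneg_of_nonpos (sub_nonneg.2 huv) hm]

lemma condExp_strata_average (y y' z z' w : ℝ) :
    (condExp y y' w - condExp z z' (1 / 2)) * (1 / 2)
      + (condExp y y' (1 / 2) - condExp z z' (1 - w)) * (1 - 1 / 2)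
      = condExp y y' ((2 * w + 1) / 4) - condExp z z' (1 - (2 * w + 1) / 4) := by
  simp only [condExp]; ring

lemma half_weighted_sub_eq_condExp (y y' z z' : ℝ) :
    (y - z) * (1 / 2) + (y' - z') * (1 - 1 / 2)
      = condExp y y' (1 / 2) - condExp z z' (1 - 1 / 2) := by
  simp only [condExp]; ring

lemma pcGiven_half (x x' v v' : ℝ) : pcGiven x x' v v' (1 / 2) = x * v / (x * v + x' * v') := by
  unfold pcGiven
  rw [show (1 : ℝ) - 1 / 2 = 1 / 2 by norm_num, ← add_mul, mul_div_mul_right _ _ (by norm_num)]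

lemma pcGiven_half_one_one (p : ℝ) : pcGiven p (1 - p) 1 1 (1 / 2) = p := by
  rw [pcGiven_half]; simp

lemma sq_add_one_sub_sq_pos (p : ℝ) : 0 < p * p + (1 - p) * (1 - p) := by
  nlinarith [sq_nonneg (2 * p - 1)]

lemma pcGiven_half_concordant_one_sub (p : ℝ) :
    pcGiven (1 - p) (1 - (1 - p)) (1 - p) (1 - (1 - p)) (1 / 2)
      = 1 - p * p / (p * p + (1 - p) * (1 - p)) := by
  have hD := (sq_add_one_sub_sq_pos p).ne'
  rw [pcGiven_half, sub_sub_cancel, eq_sub_iff_add_eq, add_comm ((1 - p) * (1 - p)),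
    ← add_div, div_eq_one_iff_eq hD]
  ring

lemma pcGiven_half_discordant {p : ℝ} (hp0 : p ≠ 0) (hp1 : p ≠ 1) :
    pcGiven p (1 - p) (1 - p) (1 - (1 - p)) (1 / 2) = 1 / 2 := by
  have hq : 1 - p ≠ 0 := sub_ne_zero.2 (Ne.symm hp1)
  rw [pcGiven_half, sub_sub_cancel]
  field_simp
  ring

lemma pcGiven_half_discordant' {p : ℝ} (hp0 : p ≠ 0) (hp1 : p ≠ 1) :
    pcGiven (1 - p) (1 - (1 - p)) p (1 - p) (1 / 2) = 1 / 2 := by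
  have hq : 1 - p ≠ 0 := sub_ne_zero.2 (Ne.symm hp1)
  rw [pcGiven_half, sub_sub_cancel]
  field_simp
  ring

lemma half_le_sq_div_sq_add_sq {p : ℝ} (hp : 1 / 2 ≤ p) :
    1 / 2 ≤ p * p / (p * p + (1 - p) * (1 - p)) := by
  rw [le_div_iff₀ (sq_add_one_sub_sq_pos p)]
  nlinarith

lemma sq_div_sq_add_sq_le {p : ℝ} (hp : 1 / 2 ≤ p) :
    p * p / (p * p + (1 - p) * (1 - p)) ≤ 2 * p - 1 / 2 := by
  rw [div_le_iff₀ (sq_add_one_sub_sq_pos p)]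
  nlinarith [pow_nonneg (by linarith : (0 : ℝ) ≤ 2 * p - 1) 3]

theorem stmt3_general (pc pdc pdc' pac pac' Yac Yac' Ybc Ybc' : ℝ)
    (hpac1 : pac < 1)
    (hc : pc = 1/2)
    (h1 : pac = 1 - pac') (h2 : pac = pdc) (h3 : pdc = 1 - pdc') (h4 : 1/2 ≤ pac)
    (hY1 : Yac - Yac' ≤ Ybc' - Ybc) :
    (condExp Yac Yac' (pcGiven pac pac' 1 1 pc) - condExp Ybc Ybc' (pcGiven (1 - pac) (1 - pac') 1 1 pc)) ≤ ((condExp Yac Yac' (pcGiven pac pac' pdc pdc' pc) - condExp Ybc Ybc' (pcGiven (1 - pac) (1 - pac') pdc pdc' pc)) * (pdc * pc + pdc' * (1 - pc)) + (condExp Yac Yac' (pcGiven pac pac' (1 - pdc) (1 - pdc') pc) - condExp Ybc Ybc' (pcGiven (1 - pac) (1 - pac') (1 - pdc) (1 - pdc') pc)) * (1 - (pdc * pc + pdc' * (1 - pc)))) ∧ ((condExp Yac Yac' (pcGiven pac pac' pdc pdc' pc) - condExp Ybc Ybc' (pcGiven (1 - pac) (1 - pac') pdc pdc' pc)) * (pdc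 * pc + pdc' * (1 - pc)) + (condExp Yac Yac' (pcGiven pac pac' (1 - pdc) (1 - pdc') pc) - condExp Ybc Ybc' (pcGiven (1 - pac) (1 - pac') (1 - pdc) (1 - pdc') pc)) * (1 - (pdc * pc + pdc' * (1 - pc)))) ≤ ((Yac - Ybc) * pc + (Yac' - Ybc') * (1 - pc)) := by
  obtain rfl : pac' = 1 - pac := by linarith
  obtain rfl : pdc' = 1 - pac := by linarith
  subst hc h2
  have hp0 : pac ≠ 0 := by linarith
  have hp1 : pac ≠ 1 := hpac1.ne
  have hpd : pac * (1 / 2) + (1 - pac) * (1 - 1 / 2) = 1 / 2 := by ring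
  rw [pcGiven_half_one_one, pcGiven_half_one_one, pcGiven_half pac, pcGiven_half_concordant_one_sub,
    pcGiven_half_discordant hp0 hp1, pcGiven_half_discordant' hp0 hp1, hpd,
    condExp_strata_average, half_weighted_sub_eq_condExp]
  have hf := condExp_sub_condExp_one_sub_antitone (y := Yac) (y' := Yac') (z := Ybc) (z' := Ybc')
    (by linarith)
  have hw := half_le_sq_div_sq_add_sq h4
  have hw' := sq_div_sq_add_sq_le h4
  exact ⟨hf (by linarith), hf (by linarith)⟩

/-- Proxy setup, nonmonotone case: if p(c) = 1/2,
p(a|c) = p(a'|c') = p(d|c) = p(d'|c') ≥ 1/2 and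
E[Y|a,c] - E[Y|a,c'] ≤ E[Y|a',c'] - E[Y|a',c] ≤ 0,
then RD_crude ≤ RD_obs ≤ RD_true. -/
theorem stmt3 (pc pdc pdc' pac pac' Yac Yac' Ybc Ybc' : ℝ)
    (hpc0 : 0 < pc) (hpc1 : pc < 1)
    (hpdc0 : 0 < pdc) (hpdc1 : pdc < 1) (hpdc'0 : 0 < pdc') (hpdc'1 : pdc' < 1)
    (hpac0 : 0 < pac) (hpac1 : pac < 1) (hpac'0 : 0 < pac') (hpac'1 : pac' < 1)
    (hc : pc = 1/2)
    (h1 : pac = 1 - pac') (h2 : pac = pdc) (h3 : pdc = 1 - pdc') (h4 : 1/2 ≤ pac)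
    (hY1 : Yac - Yac' ≤ Ybc' - Ybc) (hY2 : Ybc' - Ybc ≤ 0) :
    (condExp Yac Yac' (pcGiven pac pac' 1 1 pc) - condExp Ybc Ybc' (pcGiven (1 - pac) (1 - pac') 1 1 pc)) ≤ ((condExp Yac Yac' (pcGiven pac pac' pdc pdc' pc) - condExp Ybc Ybc' (pcGiven (1 - pac) (1 - pac') pdc pdc' pc)) * (pdc * pc + pdc' * (1 - pc)) + (condExp Yac Yac' (pcGiven pac pac' (1 - pdc) (1 - pdc') pc) - condExp Ybc Ybc' (pcGiven (1 - pac) (1 - pac') (1 - pdc) (1 - pdc') pc)) * (1 - (pdc * pc + pdc' * (1 - pc)))) ∧ ((condExp Yac Yac' (pcGiven pac pac' pdc pdc' pc) - condExp Ybc Ybc' (pcGiven (1 - pac) (1 - pac') pdc pdc' pc)) * (pdc * pc + pdc' * (1 - pc)) + (condExp Yac Yac' (pcGiven pac pac' (1 - pdc) (1 - pdc') pc) - condExp Ybc Ybc' (pcGiven (1 - pac) (1 - pac') (1 - pdc) (1 - pdc') pc)) * (1 - (pdc * pc + pdc' * (1 - pc)))) ≤ ((Yac - Ybc) * pc + (Yac'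 - Ybc') * (1 - pc)) :=
  stmt3_general pc pdc pdc' pac pac' Yac Yac' Ybc Ybc' hpac1 hc h1 h2 h3 h4 hY1
end

section
/- In the driver setup: if E[Y|A,D] is monotone in D, then E[Y|A,C] is monotone in C. -/
/-- For a function `f` of two binary arguments, `SameDirection (f a d) (f a d') (f a' d) (f a' d')`
says that `f` is monotone in its second argument. -/
def SameDirection {R : Type*} [LE R] (x x' y y' : R) : Prop :=
  (x' ≤ x ∧ y' ≤ y) ∨ (x ≤ x' ∧ y ≤ y')

theorem SameDirection.of_sub_eq_mul {R : Type*} [CommRing R] [LinearOrder R]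
    [IsStrictOrderedRing R] {x x' y y' a a' b b' k₁ k₂ s : R} (hk₁ : 0 < k₁ * s)
    (hk₂ : 0 < k₂ * s) (hx : x - x' = (a - a') * k₁) (hy : y - y' = (b - b') * k₂)
    (h : SameDirection x x' y y') : SameDirection a a' b b' := by
  have hk : 0 < k₁ * k₂ :=
    pos_of_mul_pos_left (b := s * s) (by linarith [mul_pos hk₁ hk₂]) (mul_self_nonneg s)
  rcases mul_pos_iff.1 hk with ⟨hk₁, hk₂⟩ | ⟨hk₁, hk₂⟩ <;>
    rcases h with ⟨h₁, h₂⟩ | ⟨h₁, h₂⟩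
  · exact .inl ⟨by nlinarith, by nlinarith⟩
  · exact .inr ⟨by nlinarith, by nlinarith⟩
  · exact .inr ⟨by nlinarith, by nlinarith⟩
  · exact .inl ⟨by nlinarith, by nlinarith⟩

theorem div_add_mem_Ioo {K : Type*} [Field K] [LinearOrder K] [IsStrictOrderedRing K] {a b : K}
    (ha : 0 < a) (hb : 0 < b) : a / (a + b) ∈ Set.Ioo 0 1 :=
  ⟨by positivity, (div_lt_one (by positivity)).2 (by linarith)⟩

section Posterior

variable {pxc pxc' pc : ℝ}

theorem pcGiven_sub_pcGiven (hx : 0 < pxc) (hx' : 0 < pxc') (hpc : pc ∈ Set.Ioo 0 1)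
    {u u' v v' : ℝ} (hu : 0 < u) (hu' : 0 < u') (hv : 0 < v) (hv' : 0 < v') :
    pcGiven pxc pxc' u u' pc - pcGiven pxc pxc' v v' pc =
      pxc * pxc' * pc * (1 - pc) * (u * v' - v * u') /
        ((pxc * u * pc + pxc' * u' * (1 - pc)) * (pxc * v * pc + pxc' * v' * (1 - pc))) := by
  obtain ⟨hpc0, hpc1⟩ := hpc
  have : 0 < 1 - pc := sub_pos.2 hpc1
  unfold pcGiven
  rw [div_sub_div _ _ (by positivity) (by positivity)]
  ring

theorem pcGiven_sub_pcGiven_one_sub_mul_pos (hx : 0 < pxc) (hx' : 0 < pxc')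
    (hpc : pc ∈ Set.Ioo 0 1) {v v' : ℝ} (hv : v ∈ Set.Ioo 0 1)
    (hv' : v' ∈ Set.Ioo 0 1) (hvv : v ≠ v') :
    0 < (pcGiven pxc pxc' v v' pc - pcGiven pxc pxc' (1 - v) (1 - v') pc) * (v - v') := by
  obtain ⟨hv0, hv1⟩ := hv
  obtain ⟨hv'0, hv'1⟩ := hv'
  have := hpc.1
  have := sub_pos.2 hpc.2
  have h1v : 0 < 1 - v := sub_pos.2 hv1
  have h1v' : 0 < 1 - v' := sub_pos.2 hv'1
  have : v - v' ≠ 0 := sub_ne_zero.2 hvv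
  rw [pcGiven_sub_pcGiven hx hx' hpc hv0 hv'0 h1v h1v',
    div_mul_eq_mul_div, show v * (1 - v') - (1 - v) * v' = v - v' by ring,
    mul_assoc (pxc * pxc' * pc * (1 - pc)), ← sq]
  positivity

end Posterior

theorem bayes_ne_of_ne {pd pcd pcd' : ℝ} (hpd : pd ∈ Set.Ioo 0 1)
    (hpc : pcd * pd + pcd' * (1 - pd) ∈ Set.Ioo 0 1) (hne : pcd ≠ pcd') :
    pcd * pd / (pcd * pd + pcd' * (1 - pd)) ≠
      (1 - pcd) * pd / (1 - (pcd * pd + pcd' * (1 - pd))) := by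
  rw [Ne, div_eq_div_iff hpc.1.ne' (sub_pos.2 hpc.2).ne']
  intro h
  have hpd' : pd * (1 - pd) ≠ 0 := (mul_pos hpd.1 (sub_pos.2 hpd.2)).ne'
  refine hne (sub_eq_zero.1 ((mul_eq_zero.1 ?_).resolve_left hpd'))
  linear_combination h

/-- Driver setup: if E[Y|A,D] is monotone in D, then E[Y|A,C] is monotone in C. -/
theorem stmt6 (pd pcd pcd' pac pac' Yac Yac' Ybc Ybc' : ℝ)
    (hpd0 : 0 < pd) (hpd1 : pd < 1)
    (hpcd0 : 0 < pcd) (hpcd1 : pcd < 1) (hpcd'0 : 0 < pcd') (hpcd'1 : pcd' < 1)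
    (hpac0 : 0 < pac) (hpac1 : pac < 1) (hpac'0 : 0 < pac') (hpac'1 : pac' < 1)
    (hne : pcd ≠ pcd')
    (hmonoD : (condExp Yac Yac' (pcGiven pac pac' (pcd * pd / (pcd * pd + pcd' * (1 - pd))) ((1 - pcd) * pd / (1 - (pcd * pd + pcd' * (1 - pd)))) (pcd * pd + pcd' * (1 - pd))) ≥ condExp Yac Yac' (pcGiven pac pac' (1 - (pcd * pd / (pcd * pd + pcd' * (1 - pd)))) (1 - ((1 - pcd) * pd / (1 - (pcd * pd + pcd' * (1 - pd))))) (pcd * pd + pcd' * (1 - pd))) ∧ condExp Ybc Ybc' (pcGiven (1 - pac) (1 - pac') (pcd * pd / (pcd * pd + pcd' * (1 - pd))) ((1 - pcd) * pd / (1 - (pcd * pd + pcd' * (1 - pd)))) (pcd * pd + pcd' * (1 - pd))) ≥ condExp Ybc Ybc' (pcGiven (1 - pac) (1 - pac') (1 - (pcd * pd / (pcd * pd + pcd' * (1 - pd)))) (1 - ((1 - pcd) * pd / (1 - (pcd * pd + pcd' * (1 - pd))))) (pcd * pd + pcd' * (1 - pd)))) ∨ (condExp Yac Yac' (pcGiven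 pac pac' (pcd * pd / (pcd * pd + pcd' * (1 - pd))) ((1 - pcd) * pd / (1 - (pcd * pd + pcd' * (1 - pd)))) (pcd * pd + pcd' * (1 - pd))) ≤ condExp Yac Yac' (pcGiven pac pac' (1 - (pcd * pd / (pcd * pd + pcd' * (1 - pd)))) (1 - ((1 - pcd) * pd / (1 - (pcd * pd + pcd' * (1 - pd))))) (pcd * pd + pcd' * (1 - pd))) ∧ condExp Ybc Ybc' (pcGiven (1 - pac) (1 - pac') (pcd * pd / (pcd * pd + pcd' * (1 - pd))) ((1 - pcd) * pd / (1 - (pcd * pd + pcd' * (1 - pd)))) (pcd * pd + pcd' * (1 - pd))) ≤ condExp Ybc Ybc' (pcGiven (1 - pac) (1 - pac') (1 - (pcd * pd / (pcd * pd + pcd' * (1 - pd)))) (1 - ((1 - pcd) * pd / (1 - (pcd * pd + pcd' * (1 - pd))))) (pcd * pd + pcd' * (1 - pd))))) :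
    (Yac ≥ Yac' ∧ Ybc ≥ Ybc') ∨ (Yac ≤ Yac' ∧ Ybc ≤ Ybc') := by
  have hpd' : 0 < 1 - pd := sub_pos.2 hpd1
  have hpc : pcd * pd + pcd' * (1 - pd) ∈ Set.Ioo 0 1 := ⟨by positivity, by nlinarith⟩
  have hdc : pcd * pd / (pcd * pd + pcd' * (1 - pd)) ∈ Set.Ioo 0 1 :=
    div_add_mem_Ioo (by positivity) (by positivity)
  have hdc' : (1 - pcd) * pd / (1 - (pcd * pd + pcd' * (1 - pd))) ∈ Set.Ioo 0 1 := by
    rw [show 1 - (pcd * pd + pcd' * (1 - pd)) = (1 - pcd) * pd + (1 - pcd') * (1 - pd) by ring]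
    exact div_add_mem_Ioo (mul_pos (sub_pos.2 hpcd1) hpd0) (mul_pos (sub_pos.2 hpcd'1) hpd')
  have hdcc := bayes_ne_of_ne ⟨hpd0, hpd1⟩ hpc hne
  exact SameDirection.of_sub_eq_mul
    (pcGiven_sub_pcGiven_one_sub_mul_pos hpac0 hpac'0 hpc hdc hdc' hdcc)
    (pcGiven_sub_pcGiven_one_sub_mul_pos (sub_pos.2 hpac1) (sub_pos.2 hpac'1) hpc hdc hdc' hdcc)
    (condExp_sub_condExp _ _ _ _) (condExp_sub_condExp _ _ _ _) hmonoD
end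

section
/- In the driver setup: if E[Y|A,D] and E[A|D] are both nondecreasing in D or both nonincreasing in D, then E[Y|A,C] and E[A|C] are both nondecreasing in C or both nonincreasing in C; and if one of E[Y|A,D], E[A|D] is nondecreasing in D and the other is nonincreasing in D, then one of E[Y|A,C], E[A|C] is nondecreasing in C and the other is nonincreasing in C. -/
theorem condExp_le_condExp_iff_of_lt {yc yc' w w' : ℝ} (hw : w' < w) :
    condExp yc yc' w' ≤ condExp yc yc' w ↔ yc' ≤ yc := by
  rw [← sub_nonneg, condExp_sub_condExp, mul_nonneg_iff_of_pos_right (sub_pos.2 hw), sub_nonneg]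

theorem condExp_comm (yc yc' w : ℝ) : condExp yc yc' w = condExp yc' yc (1 - w) := by
  unfold condExp; ring

theorem condExp_le_condExp_iff_of_lt' {yc yc' w w' : ℝ} (hw : w' < w) :
    condExp yc yc' w ≤ condExp yc yc' w' ↔ yc ≤ yc' := by
  rw [condExp_comm, condExp_comm yc, condExp_le_condExp_iff_of_lt (by linarith)]

theorem pcGiven_lt_pcGiven {pxc pxc' w₁ w₂ u₁ u₂ pc : ℝ} (hx : 0 < pxc) (hx' : 0 < pxc')
    (hc : 0 < pc) (hc1 : pc < 1) (hw₁ : 0 < w₁) (hw₂ : 0 < w₂) (hu₁ : 0 < u₁) (hu₂ : 0 < u₂)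
    (h : w₁ * u₂ < u₁ * w₂) :
    pcGiven pxc pxc' w₁ w₂ pc < pcGiven pxc pxc' u₁ u₂ pc := by
  have h1pc : 0 < 1 - pc := by linarith
  unfold pcGiven
  rw [div_lt_div_iff₀ (by positivity) (by positivity)]
  nlinarith [mul_lt_mul_of_pos_left h (by positivity : (0:ℝ) < pxc * pxc' * (pc * (1 - pc)))]

theorem pcGiven_lt_pcGiven_one_sub {pxc pxc' v v' pc : ℝ} (hx : 0 < pxc) (hx' : 0 < pxc')
    (hc : 0 < pc) (hc1 : pc < 1) (hv : 0 < v) (hv'1 : v' < 1) (h : v < v') :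
    pcGiven pxc pxc' v v' pc < pcGiven pxc pxc' (1 - v) (1 - v') pc :=
  pcGiven_lt_pcGiven hx hx' hc hc1 hv (by linarith) (by linarith) (by linarith) (by linarith)

theorem one_sub_pcGiven_lt_pcGiven {pxc pxc' v v' pc : ℝ} (hx : 0 < pxc) (hx' : 0 < pxc')
    (hc : 0 < pc) (hc1 : pc < 1) (hv' : 0 < v') (hv1 : v < 1) (h : v' < v) :
    pcGiven pxc pxc' (1 - v) (1 - v') pc < pcGiven pxc pxc' v v' pc :=
  pcGiven_lt_pcGiven hx hx' hc hc1 (by linarith) (by linarith) (by linarith) hv' (by linarith)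

theorem posterior_sub_posterior {pd pcd pcd' : ℝ} (hpc : pcd * pd + pcd' * (1 - pd) ≠ 0)
    (hpc' : 1 - (pcd * pd + pcd' * (1 - pd)) ≠ 0) :
    pcd * pd / (pcd * pd + pcd' * (1 - pd)) - (1 - pcd) * pd / (1 - (pcd * pd + pcd' * (1 - pd))) =
      pd * (1 - pd) / ((pcd * pd + pcd' * (1 - pd)) * (1 - (pcd * pd + pcd' * (1 - pd)))) *
        (pcd - pcd') := by
  field_simp
  ring

/-- Driver setup: if E[Y|A,D] and E[A|D] are both nondecreasing or both
nonincreasing in D, then E[Y|A,C] and E[A|C] are both nondecreasing or both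
nonincreasing in C; if one is nondecreasing and the other nonincreasing in D,
then likewise in C. -/
theorem stmt8 (pd pcd pcd' pac pac' Yac Yac' Ybc Ybc' : ℝ)
    (hpd0 : 0 < pd) (hpd1 : pd < 1)
    (hpcd0 : 0 < pcd) (hpcd1 : pcd < 1) (hpcd'0 : 0 < pcd') (hpcd'1 : pcd' < 1)
    (hpac0 : 0 < pac) (hpac1 : pac < 1) (hpac'0 : 0 < pac') (hpac'1 : pac' < 1)
    (hne : pcd ≠ pcd') :
    ((((condExp Yac Yac' (pcGiven pac pac' (pcd * pd / (pcd * pd + pcd' * (1 - pd))) ((1 - pcd) * pd / (1 - (pcd * pd + pcd' * (1 - pd)))) (pcd * pd + pcd' * (1 - pd))) ≥ condExp Yac Yac' (pcGiven pac pac' (1 - (pcd * pd / (pcd * pd + pcd' * (1 - pd)))) (1 - ((1 - pcd) * pd / (1 - (pcd * pd + pcd' * (1 - pd))))) (pcd * pd + pcd' * (1 - pd))) ∧ condExp Ybc Ybc' (pcGiven (1 - pac) (1 - pac') (pcd * pd / (pcd * pd + pcd' * (1 - pd))) ((1 - pcd) * pd / (1 - (pcd * pd + pcd' * (1 - pd))))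 (pcd * pd + pcd' * (1 - pd))) ≥ condExp Ybc Ybc' (pcGiven (1 - pac) (1 - pac') (1 - (pcd * pd / (pcd * pd + pcd' * (1 - pd)))) (1 - ((1 - pcd) * pd / (1 - (pcd * pd + pcd' * (1 - pd))))) (pcd * pd + pcd' * (1 - pd)))) ∧ ((pac * pcd + pac' * (1 - pcd)) ≥ (pac * pcd' + pac' * (1 - pcd')))) ∨ ((condExp Yac Yac' (pcGiven pac pac' (pcd * pd / (pcd * pd + pcd' * (1 - pd))) ((1 - pcd) * pd / (1 - (pcd * pd + pcd' * (1 - pd)))) (pcd * pd + pcd' * (1 - pd))) ≤ condExp Yac Yac' (pcGiven pac pac' (1 - (pcd * pd / (pcd * pd + pcd' * (1 - pd)))) (1 - ((1 - pcd) * pd / (1 - (pcd * pd + pcd' * (1 - pd))))) (pcd * pd + pcd' * (1 - pd))) ∧ condExp Ybc Ybc' (pcGiven (1 - pac) (1 - pac') (pcd * pd / (pcd * pd + pcd' * (1 - pd))) ((1 - pcd) * pd / (1 - (pcd * pd + pcd' * (1 - pd)))) (pcd * pd + pcd' * (1 - pd))) ≤ condExp Ybc Ybc' (pcGiven (1 -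 pac) (1 - pac') (1 - (pcd * pd / (pcd * pd + pcd' * (1 - pd)))) (1 - ((1 - pcd) * pd / (1 - (pcd * pd + pcd' * (1 - pd))))) (pcd * pd + pcd' * (1 - pd)))) ∧ ((pac * pcd + pac' * (1 - pcd)) ≤ (pac * pcd' + pac' * (1 - pcd'))))) →
      (((Yac ≥ Yac' ∧ Ybc ≥ Ybc') ∧ (pac ≥ pac')) ∨ ((Yac ≤ Yac' ∧ Ybc ≤ Ybc') ∧ (pac ≤ pac')))) ∧
    ((((condExp Yac Yac' (pcGiven pac pac' (pcd * pd / (pcd * pd + pcd' * (1 - pd))) ((1 - pcd) * pd / (1 - (pcd * pd + pcd' * (1 - pd)))) (pcd * pd + pcd' * (1 - pd))) ≥ condExp Yac Yac' (pcGiven pac pac' (1 - (pcd * pd / (pcd * pd + pcd' * (1 - pd)))) (1 - ((1 - pcd) * pd / (1 - (pcd * pd + pcd' * (1 - pd))))) (pcd * pd + pcd' * (1 - pd))) ∧ condExp Ybc Ybc' (pcGiven (1 - pac) (1 - pac') (pcd * pd / (pcd * pd + pcd' * (1 - pd))) ((1 - pcd) * pd / (1 - (pcd * pd + pcd' * (1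 - pd)))) (pcd * pd + pcd' * (1 - pd))) ≥ condExp Ybc Ybc' (pcGiven (1 - pac) (1 - pac') (1 - (pcd * pd / (pcd * pd + pcd' * (1 - pd)))) (1 - ((1 - pcd) * pd / (1 - (pcd * pd + pcd' * (1 - pd))))) (pcd * pd + pcd' * (1 - pd)))) ∧ ((pac * pcd + pac' * (1 - pcd)) ≤ (pac * pcd' + pac' * (1 - pcd')))) ∨ ((condExp Yac Yac' (pcGiven pac pac' (pcd * pd / (pcd * pd + pcd' * (1 - pd))) ((1 - pcd) * pd / (1 - (pcd * pd + pcd' * (1 - pd)))) (pcd * pd + pcd' * (1 - pd))) ≤ condExp Yac Yac' (pcGiven pac pac' (1 - (pcd * pd / (pcd * pd + pcd' * (1 - pd)))) (1 - ((1 - pcd) * pd / (1 - (pcd * pd + pcd' * (1 - pd))))) (pcd * pd + pcd' * (1 - pd))) ∧ condExp Ybc Ybc' (pcGiven (1 - pac) (1 - pac') (pcd * pd / (pcd * pd + pcd' * (1 - pd))) ((1 - pcd) * pd / (1 - (pcd * pd + pcd' * (1 - pd)))) (pcd * pd + pcd' * (1 - pd))) ≤ condExp Ybc Ybc' (pcGiven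 (1 - pac) (1 - pac') (1 - (pcd * pd / (pcd * pd + pcd' * (1 - pd)))) (1 - ((1 - pcd) * pd / (1 - (pcd * pd + pcd' * (1 - pd))))) (pcd * pd + pcd' * (1 - pd)))) ∧ ((pac * pcd + pac' * (1 - pcd)) ≥ (pac * pcd' + pac' * (1 - pcd'))))) →
      (((Yac ≥ Yac' ∧ Ybc ≥ Ybc') ∧ (pac ≤ pac')) ∨ ((Yac ≤ Yac' ∧ Ybc ≤ Ybc') ∧ (pac ≥ pac')))) := by
  have h1pd : 0 < 1 - pd := by linarith
  set pc := pcd * pd + pcd' * (1 - pd)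
  have hpc0 : 0 < pc := by positivity
  have hpc1 : pc < 1 := by nlinarith
  set v := pcd * pd / pc with hv
  set v' := (1 - pcd) * pd / (1 - pc) with hv'
  have hv0 : 0 < v := by positivity
  have hv1 : v < 1 := by rw [hv, div_lt_one hpc0]; nlinarith
  have hv'0 : 0 < v' := div_pos (by nlinarith) (by linarith)
  have hv'1 : v' < 1 := by rw [hv', div_lt_one (by linarith)]; nlinarith
  have hvv : v - v' = pd * (1 - pd) / (pc * (1 - pc)) * (pcd - pcd') :=
    posterior_sub_posterior hpc0.ne' (by linarith)
  have hκ : 0 < pd * (1 - pd) / (pc * (1 - pc)) := by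
    have : 0 < 1 - pc := by linarith
    positivity
  have hb0 : 0 < 1 - pac := by linarith
  have hb'0 : 0 < 1 - pac' := by linarith
  -- p(a|d) = p(a|c) p(c|d) + p(a|c') p(c'|d) is `condExp pac pac' pcd` unfolded
  rcases hne.lt_or_gt with hlt | hlt
  · have hvlt : v < v' := sub_neg.1 (hvv ▸ mul_neg_of_pos_of_neg hκ (sub_neg.2 hlt))
    have hY := pcGiven_lt_pcGiven_one_sub hpac0 hpac'0 hpc0 hpc1 hv0 hv'1 hvlt
    have hB := pcGiven_lt_pcGiven_one_sub hb0 hb'0 hpc0 hpc1 hv0 hv'1 hvlt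
    have hA := condExp_le_condExp_iff_of_lt (yc := pac) (yc' := pac') hlt
    have hA' := condExp_le_condExp_iff_of_lt' (yc := pac) (yc' := pac') hlt
    unfold condExp at hA hA'
    simp only [ge_iff_le, condExp_le_condExp_iff_of_lt hY, condExp_le_condExp_iff_of_lt' hY,
      condExp_le_condExp_iff_of_lt hB, condExp_le_condExp_iff_of_lt' hB, hA, hA']
    tauto
  · have hvlt : v' < v := sub_pos.1 (hvv ▸ mul_pos hκ (sub_pos.2 hlt))
    have hY := one_sub_pcGiven_lt_pcGiven hpac0 hpac'0 hpc0 hpc1 hv'0 hv1 hvlt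
    have hB := one_sub_pcGiven_lt_pcGiven hb0 hb'0 hpc0 hpc1 hv'0 hv1 hvlt
    have hA := condExp_le_condExp_iff_of_lt (yc := pac) (yc' := pac') hlt
    have hA' := condExp_le_condExp_iff_of_lt' (yc := pac) (yc' := pac') hlt
    unfold condExp at hA hA'
    simp only [ge_iff_le, condExp_le_condExp_iff_of_lt hY, condExp_le_condExp_iff_of_lt' hY,
      condExp_le_condExp_iff_of_lt hB, condExp_le_condExp_iff_of_lt' hB, hA, hA']
    tauto
end

section
/- In the driver setup: if E[Y|A,D] and E[A|D] are both nondecreasing in D or both nonincreasing in D, then RD_obs ≥ RD_true; and if one of E[Y|A,D], E[A|D] is nondecreasing in D and the other is nonincreasing in D, then RD_obs ≤ RD_true. -/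
lemma condExp_pos {a b w : ℝ} (ha : 0 < a) (hb : 0 < b) (hw0 : 0 ≤ w) (hw1 : w ≤ 1) :
    0 < condExp a b w := by
  unfold condExp
  rcases hw0.eq_or_lt with rfl | hw
  · simpa using hb
  · exact add_pos_of_pos_of_nonneg (mul_pos ha hw) (mul_nonneg hb.le (sub_nonneg.2 hw1))

lemma condExp_sub (a b a' b' w : ℝ) :
    condExp (a - a') (b - b') w = condExp a b w - condExp a' b' w := by
  unfold condExp; ring

lemma condExp_sub_condExp_s9 (a b v w : ℝ) :
    condExp a b v - condExp a b w = (a - b) * (v - w) := by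
  unfold condExp; ring

lemma condExp_condExp (a b v w π : ℝ) :
    condExp (condExp a b v) (condExp a b w) π = condExp a b (condExp v w π) := by
  unfold condExp; ring

/- With `x = p(x|c)`, `x' = p(x|c')` and `v = p(c|D)`, `posterior x x' v` is `p(c | x, D)`:
Bayes' rule, using `A ⊥ D | C`. -/
noncomputable def posterior (x x' v : ℝ) : ℝ := x * v / condExp x x' v

lemma pcGiven_div_div (x x' a b pc : ℝ) (h0 : pc ≠ 0) (h1 : 1 - pc ≠ 0) :
    pcGiven x x' (a / pc) (b / (1 - pc)) pc = x * a / (x * a + x' * b) := by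
  simp only [pcGiven, mul_assoc, div_mul_cancel₀ _ h0, div_mul_cancel₀ _ h1]

lemma div_mul_eq_posterior (x x' v π : ℝ) (hπ : π ≠ 0) :
    x * (v * π) / (x * (v * π) + x' * ((1 - v) * π)) = posterior x x' v := by
  rw [posterior, condExp, ← mul_div_mul_right (x * v) _ hπ]
  congr 1 <;> ring

lemma pcGiven_eq_posterior_left {x x' p q π : ℝ} (hπ : π ≠ 0)
    (h0 : p * π + q * (1 - π) ≠ 0) (h1 : 1 - (p * π + q * (1 - π)) ≠ 0) :
    pcGiven x x' (p * π / (p * π + q * (1 - π))) ((1 - p) * π / (1 - (p * π + q * (1 - π))))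
      (p * π + q * (1 - π)) = posterior x x' p := by
  rw [pcGiven_div_div _ _ _ _ _ h0 h1, div_mul_eq_posterior _ _ _ _ hπ]

lemma pcGiven_eq_posterior_right {x x' p q π : ℝ} (hπ : 1 - π ≠ 0)
    (h0 : p * π + q * (1 - π) ≠ 0) (h1 : 1 - (p * π + q * (1 - π)) ≠ 0) :
    pcGiven x x' (1 - p * π / (p * π + q * (1 - π)))
      (1 - (1 - p) * π / (1 - (p * π + q * (1 - π))))
      (p * π + q * (1 - π)) = posterior x x' q := by
  rw [one_sub_div h0, one_sub_div h1, pcGiven_div_div _ _ _ _ _ h0 h1,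
    ← div_mul_eq_posterior _ _ _ _ hπ]
  ring

lemma posterior_sub_self (x x' v : ℝ) (h : condExp x x' v ≠ 0) :
    posterior x x' v - v = (x - x') * (v * (1 - v)) / condExp x x' v := by
  rw [posterior, div_sub' h, condExp]; ring

lemma posterior_sub_posterior_s9 (x x' v w : ℝ) (hv : condExp x x' v ≠ 0)
    (hw : condExp x x' w ≠ 0) :
    posterior x x' v - posterior x x' w = x * x' * (v - w) / (condExp x x' v * condExp x x' w) := by
  rw [posterior, posterior, div_sub_div _ _ hv hw]; unfold condExp; ring

/- `condExp` doubles as the two-point mixture `a w + b (1 - w)`: here `condExp p q π = p(c)` and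
`condExp x x' p = p(x|d)`. -/
lemma exists_nonneg_arm_bias_eq_mul (x x' y y' p q π : ℝ) (hx : 0 < x) (hx' : 0 < x')
    (hp0 : 0 ≤ p) (hp1 : p ≤ 1) (hq0 : 0 ≤ q) (hq1 : q ≤ 1) (hπ0 : 0 ≤ π) (hπ1 : π ≤ 1)
    (hpq : p ≠ q) :
    ∃ l ≥ 0, condExp (condExp y y' (posterior x x' p)) (condExp y y' (posterior x x' q)) π
        - condExp y y' (condExp p q π)
      = l * ((condExp x x' p - condExp x x' q)
          * (condExp y y' (posterior x x' p) - condExp y y' (posterior x x' q))) := by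
  have hDp := condExp_pos hx hx' hp0 hp1
  have hDq := condExp_pos hx hx' hq0 hq1
  have h1p : 0 ≤ 1 - p := sub_nonneg.2 hp1
  have h1q : 0 ≤ 1 - q := sub_nonneg.2 hq1
  have h1π : 0 ≤ 1 - π := sub_nonneg.2 hπ1
  refine ⟨(π * (p * (1 - p)) * condExp x x' q + (1 - π) * (q * (1 - q)) * condExp x x' p)
    / (x * x' * (p - q) ^ 2), by positivity, ?_⟩
  rw [condExp_condExp, condExp_sub_condExp_s9, ← condExp_sub, posterior_sub_self _ _ _ hDp.ne',
    posterior_sub_self _ _ _ hDq.ne', condExp_sub_condExp_s9, condExp_sub_condExp_s9,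
    posterior_sub_posterior_s9 _ _ _ _ hDp.ne' hDq.ne']
  have hpq' : p - q ≠ 0 := sub_ne_zero.2 hpq
  generalize condExp x x' p = Dp at *
  generalize condExp x x' q = Dq at *
  unfold condExp
  field_simp

lemma sign_of_eq_mul_add_mul {la lb a a' b b' e e' obs tru : ℝ} (hla : 0 ≤ la) (hlb : 0 ≤ lb)
    (h : obs - tru = la * ((e - e') * (a - a')) + lb * ((e - e') * (b - b'))) :
    (((a ≥ a' ∧ b ≥ b') ∧ e ≥ e') ∨ ((a ≤ a' ∧ b ≤ b') ∧ e ≤ e') → obs ≥ tru) ∧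
    (((a ≥ a' ∧ b ≥ b') ∧ e ≤ e') ∨ ((a ≤ a' ∧ b ≤ b') ∧ e ≥ e') → obs ≤ tru) := by
  have hf : obs - tru = (e - e') * (la * (a - a') + lb * (b - b')) := by rw [h]; ring
  constructor <;> rintro (⟨⟨ha, hb⟩, he⟩ | ⟨⟨ha, hb⟩, he⟩)
  all_goals nlinarith [mul_le_mul_of_nonneg_left ha hla, mul_le_mul_of_nonneg_left hb hlb]

/-- Driver setup: if E[Y|A,D] and E[A|D] are both nondecreasing or both
nonincreasing in D, then RD_obs ≥ RD_true; if one is nondecreasing and the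
other nonincreasing in D, then RD_obs ≤ RD_true. -/
theorem stmt9 (pd pcd pcd' pac pac' Yac Yac' Ybc Ybc' : ℝ)
    (hpd0 : 0 < pd) (hpd1 : pd < 1)
    (hpcd0 : 0 < pcd) (hpcd1 : pcd < 1) (hpcd'0 : 0 < pcd') (hpcd'1 : pcd' < 1)
    (hpac0 : 0 < pac) (hpac1 : pac < 1) (hpac'0 : 0 < pac') (hpac'1 : pac' < 1)
    (hne : pcd ≠ pcd') :
    ((((condExp Yac Yac' (pcGiven pac pac' (pcd * pd / (pcd * pd + pcd' * (1 - pd))) ((1 - pcd) * pd / (1 - (pcd * pd + pcd' * (1 - pd)))) (pcd * pd + pcd' * (1 - pd))) ≥ condExp Yac Yac' (pcGiven pac pac' (1 - (pcd * pd / (pcd * pd + pcd' * (1 - pd)))) (1 - ((1 - pcd) * pd / (1 - (pcd * pd + pcd' * (1 - pd))))) (pcd * pd + pcd' * (1 - pd))) ∧ condExp Ybc Ybc' (pcGiven (1 - pac) (1 - pac') (pcd * pd / (pcd * pd + pcd' * (1 - pd))) ((1 - pcd) * pd / (1 - (pcd * pd + pcd' * (1 - pd)))) (pcd * pd + pcd'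 * (1 - pd))) ≥ condExp Ybc Ybc' (pcGiven (1 - pac) (1 - pac') (1 - (pcd * pd / (pcd * pd + pcd' * (1 - pd)))) (1 - ((1 - pcd) * pd / (1 - (pcd * pd + pcd' * (1 - pd))))) (pcd * pd + pcd' * (1 - pd)))) ∧ ((pac * pcd + pac' * (1 - pcd)) ≥ (pac * pcd' + pac' * (1 - pcd')))) ∨ ((condExp Yac Yac' (pcGiven pac pac' (pcd * pd / (pcd * pd + pcd' * (1 - pd))) ((1 - pcd) * pd / (1 - (pcd * pd + pcd' * (1 - pd)))) (pcd * pd + pcd' * (1 - pd))) ≤ condExp Yac Yac' (pcGiven pac pac' (1 - (pcd * pd / (pcd * pd + pcd' * (1 - pd)))) (1 - ((1 - pcd) * pd / (1 - (pcd * pd + pcd' * (1 - pd))))) (pcd * pd + pcd' * (1 - pd))) ∧ condExp Ybc Ybc' (pcGiven (1 - pac) (1 - pac') (pcd * pd / (pcd * pd + pcd' * (1 - pd))) ((1 - pcd) * pd / (1 - (pcd * pd + pcd' * (1 - pd)))) (pcd * pd + pcd' * (1 - pd))) ≤ condExp Ybc Ybc' (pcGiven (1 - pac) (1 - pac') (1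 - (pcd * pd / (pcd * pd + pcd' * (1 - pd)))) (1 - ((1 - pcd) * pd / (1 - (pcd * pd + pcd' * (1 - pd))))) (pcd * pd + pcd' * (1 - pd)))) ∧ ((pac * pcd + pac' * (1 - pcd)) ≤ (pac * pcd' + pac' * (1 - pcd'))))) →
      ((condExp Yac Yac' (pcGiven pac pac' (pcd * pd / (pcd * pd + pcd' * (1 - pd))) ((1 - pcd) * pd / (1 - (pcd * pd + pcd' * (1 - pd)))) (pcd * pd + pcd' * (1 - pd))) - condExp Ybc Ybc' (pcGiven (1 - pac) (1 - pac') (pcd * pd / (pcd * pd + pcd' * (1 - pd))) ((1 - pcd) * pd / (1 - (pcd * pd + pcd' * (1 - pd)))) (pcd * pd + pcd' * (1 - pd)))) * pd + (condExp Yac Yac' (pcGiven pac pac' (1 - (pcd * pd / (pcd * pd + pcd' * (1 - pd)))) (1 - ((1 - pcd) * pd / (1 - (pcd * pd + pcd' * (1 - pd))))) (pcd * pd + pcd' * (1 - pd))) - condExp Ybc Ybc' (pcGiven (1 - pac) (1 - pac') (1 - (pcd * pd / (pcd * pd + pcd' * (1 - pd)))) (1 - ((1 - pcd) * pd / (1 -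 (pcd * pd + pcd' * (1 - pd))))) (pcd * pd + pcd' * (1 - pd)))) * (1 - pd)) ≥ ((Yac - Ybc) * (pcd * pd + pcd' * (1 - pd)) + (Yac' - Ybc') * (1 - (pcd * pd + pcd' * (1 - pd))))) ∧
    ((((condExp Yac Yac' (pcGiven pac pac' (pcd * pd / (pcd * pd + pcd' * (1 - pd))) ((1 - pcd) * pd / (1 - (pcd * pd + pcd' * (1 - pd)))) (pcd * pd + pcd' * (1 - pd))) ≥ condExp Yac Yac' (pcGiven pac pac' (1 - (pcd * pd / (pcd * pd + pcd' * (1 - pd)))) (1 - ((1 - pcd) * pd / (1 - (pcd * pd + pcd' * (1 - pd))))) (pcd * pd + pcd' * (1 - pd))) ∧ condExp Ybc Ybc' (pcGiven (1 - pac) (1 - pac') (pcd * pd / (pcd * pd + pcd' * (1 - pd))) ((1 - pcd) * pd / (1 - (pcd * pd + pcd' * (1 - pd)))) (pcd * pd + pcd' * (1 - pd))) ≥ condExp Ybc Ybc' (pcGiven (1 - pac) (1 - pac') (1 - (pcd * pd / (pcd * pd + pcd' * (1 - pd)))) (1 - ((1 - pcd) * pd / (1 - (pcd * pd + pcd' *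 (1 - pd))))) (pcd * pd + pcd' * (1 - pd)))) ∧ ((pac * pcd + pac' * (1 - pcd)) ≤ (pac * pcd' + pac' * (1 - pcd')))) ∨ ((condExp Yac Yac' (pcGiven pac pac' (pcd * pd / (pcd * pd + pcd' * (1 - pd))) ((1 - pcd) * pd / (1 - (pcd * pd + pcd' * (1 - pd)))) (pcd * pd + pcd' * (1 - pd))) ≤ condExp Yac Yac' (pcGiven pac pac' (1 - (pcd * pd / (pcd * pd + pcd' * (1 - pd)))) (1 - ((1 - pcd) * pd / (1 - (pcd * pd + pcd' * (1 - pd))))) (pcd * pd + pcd' * (1 - pd))) ∧ condExp Ybc Ybc' (pcGiven (1 - pac) (1 - pac') (pcd * pd / (pcd * pd + pcd' * (1 - pd))) ((1 - pcd) * pd / (1 - (pcd * pd + pcd' * (1 - pd)))) (pcd * pd + pcd' * (1 - pd))) ≤ condExp Ybc Ybc' (pcGiven (1 - pac) (1 - pac') (1 - (pcd * pd / (pcd * pd + pcd' * (1 - pd)))) (1 - ((1 - pcd) * pd / (1 - (pcd * pd + pcd' * (1 - pd))))) (pcd * pd + pcd' * (1 - pd)))) ∧ ((pac * pcd + pac'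 * (1 - pcd)) ≥ (pac * pcd' + pac' * (1 - pcd'))))) →
      ((condExp Yac Yac' (pcGiven pac pac' (pcd * pd / (pcd * pd + pcd' * (1 - pd))) ((1 - pcd) * pd / (1 - (pcd * pd + pcd' * (1 - pd)))) (pcd * pd + pcd' * (1 - pd))) - condExp Ybc Ybc' (pcGiven (1 - pac) (1 - pac') (pcd * pd / (pcd * pd + pcd' * (1 - pd))) ((1 - pcd) * pd / (1 - (pcd * pd + pcd' * (1 - pd)))) (pcd * pd + pcd' * (1 - pd)))) * pd + (condExp Yac Yac' (pcGiven pac pac' (1 - (pcd * pd / (pcd * pd + pcd' * (1 - pd)))) (1 - ((1 - pcd) * pd / (1 - (pcd * pd + pcd' * (1 - pd))))) (pcd * pd + pcd' * (1 - pd))) - condExp Ybc Ybc' (pcGiven (1 - pac) (1 - pac') (1 - (pcd * pd / (pcd * pd + pcd' * (1 - pd)))) (1 - ((1 - pcd) * pd / (1 - (pcd * pd + pcd' * (1 - pd))))) (pcd * pd + pcd' * (1 - pd)))) * (1 - pd)) ≤ ((Yac - Ybc) * (pcd * pd + pcd' * (1 - pd)) + (Yac' - Ybc') * (1 - (pcd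 * pd + pcd' * (1 - pd))))) := by
  have hpc0 : 0 < pcd * pd + pcd' * (1 - pd) := condExp_pos hpcd0 hpcd'0 hpd0.le hpd1.le
  have hpc1 : 0 < 1 - (pcd * pd + pcd' * (1 - pd)) := by
    have := condExp_pos (sub_pos.2 hpcd1) (sub_pos.2 hpcd'1) hpd0.le hpd1.le
    unfold condExp at this; linarith
  simp only [pcGiven_eq_posterior_left hpd0.ne' hpc0.ne' hpc1.ne',
    pcGiven_eq_posterior_right (sub_pos.2 hpd1).ne' hpc0.ne' hpc1.ne']
  obtain ⟨la, hla, bias_a⟩ := exists_nonneg_arm_bias_eq_mul pac pac' Yac Yac' pcd pcd' pd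
    hpac0 hpac'0 hpcd0.le hpcd1.le hpcd'0.le hpcd'1.le hpd0.le hpd1.le hne
  obtain ⟨lb, hlb, bias_a'⟩ :=
    exists_nonneg_arm_bias_eq_mul (1 - pac) (1 - pac') Ybc Ybc' pcd pcd' pd (sub_pos.2 hpac1)
      (sub_pos.2 hpac'1) hpcd0.le hpcd1.le hpcd'0.le hpcd'1.le hpd0.le hpd1.le hne
  refine sign_of_eq_mul_add_mul hla hlb ?_
  unfold condExp at bias_a bias_a' ⊢
  linear_combination bias_a - bias_a'
end

section
/- In the proxy setup: if E[Y|a,d] ≥ E[Y|a,d'] and E[Y|a,c] < E[Y|a,c'], then p(c|a,d) ≤ p(c|a,d') and consequently p(d|c)·p(d'|c') ≤ p(d'|c)·p(d|c') (equivalently, p(d|c)/p(d|c') ≤ p(d'|c)/p(d'|c')). -/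
theorem condExp_le_condExp_iff {yc yc' w w' : ℝ} (h : yc < yc') :
    condExp yc yc' w ≤ condExp yc yc' w' ↔ w' ≤ w := by
  unfold condExp
  constructor <;> intro _ <;> nlinarith

theorem div_add_le_div_add_iff {x y x' y' : ℝ} (hxy : 0 < x + y) (hxy' : 0 < x' + y') :
    x / (x + y) ≤ x' / (x' + y') ↔ x * y' ≤ x' * y := by
  rw [div_le_div_iff₀ hxy hxy']
  constructor <;> intro _ <;> linarith

theorem pcGiven_le_pcGiven_iff {pxc pxc' pvc pvc' puc puc' pc : ℝ}
    (hpxc : 0 < pxc) (hpxc' : 0 < pxc') (hpc0 : 0 < pc) (hpc1 : pc < 1)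
    (hpvc : 0 < pvc) (hpvc' : 0 < pvc') (hpuc : 0 < puc) (hpuc' : 0 < puc') :
    pcGiven pxc pxc' pvc pvc' pc ≤ pcGiven pxc pxc' puc puc' pc ↔ pvc * puc' ≤ puc * pvc' := by
  have hpc' : 0 < 1 - pc := sub_pos.2 hpc1
  have hscale : 0 < pxc * pxc' * pc * (1 - pc) := by positivity
  unfold pcGiven
  rw [div_add_le_div_add_iff (by positivity) (by positivity)]
  calc pxc * pvc * pc * (pxc' * puc' * (1 - pc)) ≤ pxc * puc * pc * (pxc' * pvc' * (1 - pc))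
      ↔ pxc * pxc' * pc * (1 - pc) * (pvc * puc') ≤ pxc * pxc' * pc * (1 - pc) * (puc * pvc') := by
        constructor <;> intro h <;> linarith
    _ ↔ pvc * puc' ≤ puc * pvc' := mul_le_mul_iff_right₀ hscale

theorem stmt15_general (pc pdc pdc' pac pac' Yac Yac' : ℝ)
    (hpc0 : 0 < pc) (hpc1 : pc < 1)
    (hpdc0 : 0 < pdc) (hpdc1 : pdc < 1) (hpdc'0 : 0 < pdc') (hpdc'1 : pdc' < 1)
    (hpac0 : 0 < pac) (hpac'0 : 0 < pac')
    (hEY : condExp Yac Yac' (pcGiven pac pac' pdc pdc' pc) ≥ condExp Yac Yac' (pcGiven pac pac' (1 - pdc) (1 - pdc') pc))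
    (hYC : Yac < Yac') :
    pcGiven pac pac' pdc pdc' pc ≤ pcGiven pac pac' (1 - pdc) (1 - pdc') pc ∧
    pdc * (1 - pdc') ≤ (1 - pdc) * pdc' := by
  have hposterior := (condExp_le_condExp_iff hYC).1 hEY
  exact ⟨hposterior, (pcGiven_le_pcGiven_iff hpac0 hpac'0 hpc0 hpc1 hpdc0 hpdc'0
    (sub_pos.2 hpdc1) (sub_pos.2 hpdc'1)).1 hposterior⟩

/-- Proxy setup: if E[Y|a,d] ≥ E[Y|a,d'] and E[Y|a,c] < E[Y|a,c'], then
p(c|a,d) ≤ p(c|a,d') and p(d|c) p(d'|c') ≤ p(d'|c) p(d|c'). -/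
theorem stmt15 (pc pdc pdc' pac pac' Yac Yac' Ybc Ybc' : ℝ)
    (hpc0 : 0 < pc) (hpc1 : pc < 1)
    (hpdc0 : 0 < pdc) (hpdc1 : pdc < 1) (hpdc'0 : 0 < pdc') (hpdc'1 : pdc' < 1)
    (hpac0 : 0 < pac) (hpac1 : pac < 1) (hpac'0 : 0 < pac') (hpac'1 : pac' < 1)
    (hne : pdc ≠ pdc')
    (hEY : condExp Yac Yac' (pcGiven pac pac' pdc pdc' pc) ≥ condExp Yac Yac' (pcGiven pac pac' (1 - pdc) (1 - pdc') pc))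
    (hYC : Yac < Yac') :
    pcGiven pac pac' pdc pdc' pc ≤ pcGiven pac pac' (1 - pdc) (1 - pdc') pc ∧
    pdc * (1 - pdc') ≤ (1 - pdc) * pdc' :=
  stmt15_general pc pdc pdc' pac pac' Yac Yac' hpc0 hpc1 hpdc0 hpdc1 hpdc'0 hpdc'1 hpac0 hpac'0 hEY
    hYC
end

section
/- In the proxy setup (without requiring p(d|c) ≠ p(d|c')): suppose p(c) = 1/2, p(d|c) = 1−p(d|c') (i.e., p(d|c) = p(d'|c')), and 1−p(a|c') ≥ p(a|c) ≥ 1/2 (i.e., p(a'|c') ≥ p(a|c) ≥ 1/2). Then p(c|a,d) ≥ 1−p(c|a',d') (i.e., p(c|a,d) ≥ p(c'|a',d')), p(c|a,d') ≥ 1−p(c|a',d) (i.e., p(c|a,d') ≥ p(c'|a',d)), and p(c|a,d)·p(d) + p(c|a,d')·p(d') ≥ 1/2, where p(d) = p(d|c)p(c)+p(d|c')p(c') and p(d') = 1−p(d). -/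
/-!
With the prior `p(c) = 1/2`, every posterior is `α / (α + β)` for the two likelihood products
`α`, `β`, so comparing posteriors amounts to comparing cross products. Because
`p(d|c) = p(d'|c')`, the proxy contributes the same likelihood ratio on both sides of the first two
inequalities, which reduce to `p(a'|c) p(a|c) ≥ p(a'|c') p(a|c')`, i.e. to
`(p(a|c) - p(a|c')) (1 - p(a|c) - p(a|c')) ≥ 0`. Since `p(d) = 1/2`, the last inequality says
`p(c|a,d) ≥ 1 - p(c|a,d') = p(c'|a,d')`, which reduces to `p(a|c)² ≥ p(a|c')²`.
-/

theorem pcGiven_half_s17 (pxc pxc' pvc pvc' : ℝ) :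
    pcGiven pxc pxc' pvc pvc' (1 / 2) = pxc * pvc / (pxc * pvc + pxc' * pvc') := by
  unfold pcGiven
  rw [show (1 : ℝ) - 1 / 2 = 1 / 2 by norm_num, ← add_mul, mul_div_mul_right _ _ (by norm_num)]

theorem one_sub_div_add {a b : ℝ} (h : a + b ≠ 0) : 1 - a / (a + b) = b / (b + a) := by
  rw [one_sub_div h, add_sub_cancel_left, add_comm]

theorem div_add_le_div_add {a b c d : ℝ} (hab : 0 < a + b) (hcd : 0 < c + d)
    (h : a * d ≤ c * b) : a / (a + b) ≤ c / (c + d) := by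
  rw [div_le_div_iff₀ hab hcd]
  linarith

theorem one_sub_div_add_le_div_add {a b c d : ℝ} (hab : 0 < a + b) (hcd : 0 < c + d)
    (h : b * d ≤ c * a) : 1 - a / (a + b) ≤ c / (c + d) := by
  rw [one_sub_div_add hab.ne']
  exact div_add_le_div_add (by linarith) hcd h

theorem mul_one_sub_le_mul_one_sub {x y : ℝ} (hyx : y ≤ x) (hxy : x + y ≤ 1) :
    y * (1 - y) ≤ x * (1 - x) := by
  nlinarith

theorem stmt17_general (pc pdc pdc' pac pac' : ℝ)
    (hpdc'0 : 0 < pdc') (hpdc'1 : pdc' < 1)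
    (hpac'0 : 0 < pac')
    (hc : pc = 1/2) (hd : pdc = 1 - pdc')
    (ha1 : pac ≤ 1 - pac') (ha2 : 1/2 ≤ pac) :
    pcGiven pac pac' pdc pdc' pc ≥ 1 - (pcGiven (1 - pac) (1 - pac') (1 - pdc) (1 - pdc') pc) ∧
    pcGiven pac pac' (1 - pdc) (1 - pdc') pc ≥ 1 - (pcGiven (1 - pac) (1 - pac') pdc pdc' pc) ∧
    pcGiven pac pac' pdc pdc' pc * (pdc * pc + pdc' * (1 - pc)) + pcGiven pac pac' (1 - pdc) (1 - pdc') pc * (1 - (pdc * pc + pdc' * (1 - pc))) ≥ 1/2 := by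
  subst hc hd
  have hx' : 0 < 1 - pac := by linarith
  have hy' : 0 < 1 - pac' := by linarith
  have hyx : pac' ≤ pac := by linarith
  have hq : 0 ≤ pdc' * (1 - pdc') := by positivity
  have hvar := mul_le_mul_of_nonneg_left (mul_one_sub_le_mul_one_sub hyx (by linarith)) hq
  have hsq := mul_le_mul_of_nonneg_left (mul_self_le_mul_self hpac'0.le hyx) hq
  have hpd : (1 - pdc') * (1 / 2) + pdc' * (1 - 1 / 2) = 1 / 2 := by ring
  simp only [pcGiven_half_s17, sub_sub_cancel, hpd]
  refine ⟨?_, ?_, ?_⟩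
  · exact one_sub_div_add_le_div_add (by positivity) (by positivity) (by linear_combination hvar)
  · exact one_sub_div_add_le_div_add (by positivity) (by positivity) (by linear_combination hvar)
  · have h := one_sub_div_add_le_div_add (a := pac * pdc') (b := pac' * (1 - pdc'))
      (c := pac * (1 - pdc')) (d := pac' * pdc') (by positivity) (by positivity)
      (by linear_combination hsq)
    linarith

/-- Proxy setup: if p(c) = 1/2, p(d|c) = p(d'|c') and p(a'|c') ≥ p(a|c) ≥ 1/2,
then p(c|a,d) ≥ p(c'|a',d'), p(c|a,d') ≥ p(c'|a',d) and
p(c|a,d) p(d) + p(c|a,d') p(d') ≥ 1/2. -/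
theorem stmt17 (pc pdc pdc' pac pac' : ℝ)
    (hpc0 : 0 < pc) (hpc1 : pc < 1)
    (hpdc0 : 0 < pdc) (hpdc1 : pdc < 1) (hpdc'0 : 0 < pdc') (hpdc'1 : pdc' < 1)
    (hpac0 : 0 < pac) (hpac1 : pac < 1) (hpac'0 : 0 < pac') (hpac'1 : pac' < 1)
    (hc : pc = 1/2) (hd : pdc = 1 - pdc')
    (ha1 : pac ≤ 1 - pac') (ha2 : 1/2 ≤ pac) :
    pcGiven pac pac' pdc pdc' pc ≥ 1 - (pcGiven (1 - pac) (1 - pac') (1 - pdc) (1 - pdc') pc) ∧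
    pcGiven pac pac' (1 - pdc) (1 - pdc') pc ≥ 1 - (pcGiven (1 - pac) (1 - pac') pdc pdc' pc) ∧
    pcGiven pac pac' pdc pdc' pc * (pdc * pc + pdc' * (1 - pc)) + pcGiven pac pac' (1 - pdc) (1 - pdc') pc * (1 - (pdc * pc + pdc' * (1 - pc))) ≥ 1/2 :=
  stmt17_general pc pdc pdc' pac pac' hpdc'0 hpdc'1 hpac'0 hc hd ha1 ha2
end
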